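/- For u, v ∈ U(n), the matrices uᵗu and vᵗv have the same spectrum (are conjugate in U(n)) if and only if there exist k₁, k₂ ∈ O(n) with v = k₁ u k₂⁻¹. -/

import Mathlib

/-!
A symmetric unitary matrix `S` has real and imaginary parts that are commuting real symmetric
matrices, so it is diagonalised by a real orthogonal matrix: `S = k D kᵀ`. Two symmetric unitary
matrices with the same spectrum therefore have diagonal forms that differ by a permutation, and so
are conjugate by a real orthogonal matrix. Applied to `uᵀu` and `vᵀv` this gives a real orthogonal
`k` with `(vk)ᵀ(vk) = uᵀu`; then `A = (vk)u⁻¹` is unitary with `AᵀA = 1`, hence `Aᵀ = A⁻¹ = Aᴴ`,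
so `A` is real orthogonal and `v = A u k⁻¹`.
-/

open Matrix Module

theorem Fintype.exists_perm_comp_eq_of_map_univ_val_eq {ι α : Type*} [Fintype ι] {f g : ι → α}
    (h : Multiset.map f Finset.univ.val = Multiset.map g Finset.univ.val) :
    ∃ σ : Equiv.Perm ι, g = f ∘ σ := by
  classical
  have card_fiber (c : α) : Fintype.card {i // g i = c} = Fintype.card {i // f i = c} := by
    have hc := congrArg (Multiset.count c) h.symm
    rw [Multiset.count_map, Multiset.count_map] at hc
    simp only [Fintype.card_subtype, Finset.card_def, Finset.filter_val]
    simpa only [eq_comm] using hc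
  exact ⟨Equiv.ofFiberEquiv fun c => Fintype.equivOfCardEq (card_fiber c),
    funext fun i => (Equiv.ofFiberEquiv_map _ i).symm⟩

theorem LinearMap.IsSymmetric.exists_orthonormalBasis_eigenvectors_of_commute
    {𝕜 E ι : Type*} [RCLike 𝕜] [NormedAddCommGroup E] [InnerProductSpace 𝕜 E]
    [FiniteDimensional 𝕜 E] [Fintype ι] {A B : E →ₗ[𝕜] E} (hA : A.IsSymmetric)
    (hB : B.IsSymmetric) (hAB : Commute A B) (hι : finrank 𝕜 E = Fintype.card ι) :
    ∃ (b : OrthonormalBasis ι 𝕜 E) (α β : ι → 𝕜),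
      ∀ i, A (b i) = α i • b i ∧ B (b i) = β i • b i := by
  classical
  let V : 𝕜 × 𝕜 → Submodule 𝕜 E := fun μ =>
    Module.End.eigenspace A μ.2 ⊓ Module.End.eigenspace B μ.1
  have hV : DirectSum.IsInternal V := hA.directSum_isInternal_of_commute hB hAB
  -- `subordinateOrthonormalBasis` needs a finite index type: keep the nonzero joint eigenspaces.
  let W : {μ // V μ ≠ ⊥} → Submodule 𝕜 E := fun μ => V μ
  have hW : DirectSum.IsInternal W := DirectSum.isInternal_ne_bot_iff.2 hV
  have : Fintype {μ // V μ ≠ ⊥} := hV.submodule_iSupIndep.fintypeNeBotOfFiniteDimensional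
  have hWo : OrthogonalFamily 𝕜 (fun μ => W μ) fun μ => (W μ).subtypeₗᵢ :=
    (hA.orthogonalFamily_eigenspace_inf_eigenspace hB).comp Subtype.coe_injective
  let e := (Fintype.equivFin ι).symm
  let μ : ι → {μ // V μ ≠ ⊥} := fun i => hW.subordinateOrthonormalBasisIndex hι (e.symm i) hWo
  refine ⟨(hW.subordinateOrthonormalBasis hι hWo).reindex e, fun i => (μ i).1.2,
    fun i => (μ i).1.1, fun i => ?_⟩
  have hmem := hW.subordinateOrthonormalBasis_subordinate hι (e.symm i) hWo
  rw [OrthonormalBasis.reindex_apply]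
  exact ⟨Module.End.mem_eigenspace_iff.1 hmem.1, Module.End.mem_eigenspace_iff.1 hmem.2⟩

namespace Matrix

section Complexification

variable {n : Type*}

theorem star_map_ofReal (A : Matrix n n ℝ) : star (A.map ((↑) : ℝ → ℂ)) = (A.map (↑))ᵀ := by
  ext i j
  simp

theorem map_re_add_I_smul_map_im (S : Matrix n n ℂ) :
    (S.map Complex.re).map (↑) + Complex.I • (S.map Complex.im).map (↑) = S := by
  ext i j
  simpa [mul_comm] using Complex.re_add_im (S i j)

theorem map_ofReal_one [DecidableEq n] : (1 : Matrix n n ℝ).map ((↑) : ℝ → ℂ) = 1 :=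
  Matrix.map_one _ Complex.ofReal_zero Complex.ofReal_one

variable [Fintype n]

theorem map_ofReal_mul (A B : Matrix n n ℝ) :
    (A * B).map ((↑) : ℝ → ℂ) = A.map (↑) * B.map (↑) :=
  Matrix.map_mul (f := Complex.ofRealHom)

variable [DecidableEq n]

theorem map_ofReal_mem_unitaryGroup {k : Matrix n n ℝ} (hk : k ∈ orthogonalGroup n ℝ) :
    k.map ((↑) : ℝ → ℂ) ∈ unitaryGroup n ℂ := by
  rw [mem_unitaryGroup_iff', star_map_ofReal, ← transpose_map, ← map_ofReal_mul,
    (mem_orthogonalGroup_iff' _ _).1 hk, map_ofReal_one]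

theorem transpose_map_ofReal_mul_self {k : Matrix n n ℝ} (hk : k ∈ orthogonalGroup n ℝ) :
    (k.map ((↑) : ℝ → ℂ))ᵀ * k.map (↑) = 1 := by
  rw [← star_map_ofReal]
  exact mem_unitaryGroup_iff'.1 (map_ofReal_mem_unitaryGroup hk)

theorem transpose_map_ofReal_mul_cancel_left {k : Matrix n n ℝ} (hk : k ∈ orthogonalGroup n ℝ)
    (M : Matrix n n ℂ) : (k.map ((↑) : ℝ → ℂ))ᵀ * (k.map (↑) * M) = M := by
  rw [← Matrix.mul_assoc, transpose_map_ofReal_mul_self hk, Matrix.one_mul]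

theorem exists_map_ofReal_eq_of_transpose_mul_self_eq_one {A : Matrix n n ℂ}
    (hA : A ∈ unitaryGroup n ℂ) (hAt : Aᵀ * A = 1) :
    ∃ k ∈ orthogonalGroup n ℝ, k.map (↑) = A := by
  have hstar : Aᵀ = star A := left_inv_eq_right_inv hAt (mem_unitaryGroup_iff.1 hA)
  have hreal : (A.map Complex.re).map (↑) = A := by
    ext i j
    exact (Complex.conj_eq_iff_re (z := A i j)).1
      (by simpa using (congrFun (congrFun hstar j) i).symm)
  refine ⟨A.map Complex.re, ?_, hreal⟩
  rw [mem_orthogonalGroup_iff']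
  apply map_injective Complex.ofReal_injective
  dsimp only
  rw [map_ofReal_mul, transpose_map, hreal, hAt, map_ofReal_one]

end Complexification

variable {n R : Type*} [Fintype n] [DecidableEq n]

theorem charpoly_mul_mul_of_mul_eq_one [CommRing R] {P Q : Matrix n n R} (h : Q * P = 1)
    (M : Matrix n n R) : (P * M * Q).charpoly = M.charpoly := by
  rw [charpoly_mul_comm, ← Matrix.mul_assoc, h, Matrix.one_mul]

theorem exists_perm_of_charpoly_diagonal_eq {K : Type*} [Field K] {d₁ d₂ : n → K}
    (h : (diagonal d₁).charpoly = (diagonal d₂).charpoly) :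
    ∃ σ : Equiv.Perm n, d₂ = d₁ ∘ σ := by
  have roots_eq (d : n → K) :
      (diagonal d).charpoly.roots = Multiset.map d Finset.univ.val := by
    rw [charpoly_diagonal, Polynomial.roots_prod _ _ (Finset.prod_ne_zero_iff.2
      fun i _ => Polynomial.X_sub_C_ne_zero (d i))]
    simp
  apply Fintype.exists_perm_comp_eq_of_map_univ_val_eq
  rw [← roots_eq, ← roots_eq, h]

theorem permMatrix_mul_diagonal_mul_transpose [NonAssocSemiring R] (σ : Equiv.Perm n)
    (d : n → R) : σ.permMatrix R * diagonal d * (σ.permMatrix R)ᵀ = diagonal (d ∘ σ) := by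
  rw [transpose_permMatrix, PEquiv.toMatrix_toPEquiv_mul, PEquiv.mul_toMatrix_toPEquiv,
    submatrix_submatrix]
  exact submatrix_diagonal_equiv d σ

theorem permMatrix_mem_orthogonalGroup [CommRing R] (σ : Equiv.Perm n) :
    σ.permMatrix R ∈ orthogonalGroup n R := by
  rw [mem_orthogonalGroup_iff', transpose_permMatrix, ← permMatrix_mul, mul_inv_cancel,
    permMatrix_one]

theorem transpose_mul_self_mem_unitaryGroup [CommRing R] [StarRing R] {w : Matrix n n R}
    (hw : w ∈ unitaryGroup n R) : wᵀ * w ∈ unitaryGroup n R :=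
  mul_mem (transpose_mem_unitaryGroup_iff.2 hw) hw

theorem mul_eq_mul_diagonal_of_mulVec_transpose [CommSemiring R] {X U : Matrix n n R}
    {α : n → R} (h : ∀ j, X *ᵥ Uᵀ j = α j • Uᵀ j) : X * U = U * diagonal α := by
  ext i j
  rw [mul_diagonal]
  simpa [mul_apply, mulVec, dotProduct, mul_comm] using congrFun (h j) i

theorem IsHermitian.exists_unitary_diagonalize_of_commute {𝕜 : Type*} [RCLike 𝕜]
    {X Y : Matrix n n 𝕜} (hX : X.IsHermitian) (hY : Y.IsHermitian) (hXY : Commute X Y) :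
    ∃ U ∈ unitaryGroup n 𝕜, ∃ α β : n → 𝕜,
      X = U * diagonal α * star U ∧ Y = U * diagonal β * star U := by
  obtain ⟨b, α, β, hb⟩ :=
    (isSymmetric_toEuclideanLin_iff.2 hX).exists_orthonormalBasis_eigenvectors_of_commute
      (isSymmetric_toEuclideanLin_iff.2 hY) (hXY.map (toLpLinAlgEquiv 2)) finrank_euclideanSpace
  set U := (EuclideanSpace.basisFun n 𝕜).toBasis.toMatrix b
  have hU : U ∈ unitaryGroup n 𝕜 :=
    (EuclideanSpace.basisFun n 𝕜).toMatrix_orthonormalBasis_mem_unitary b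
  have conj_diagonal_of_eigen {Z : Matrix n n 𝕜} {γ : n → 𝕜}
      (h : ∀ j, toEuclideanLin Z (b j) = γ j • b j) : Z = U * diagonal γ * star U := by
    rw [← mul_eq_mul_diagonal_of_mulVec_transpose (U := U) fun j => congrArg WithLp.ofLp (h j),
      Matrix.mul_assoc, mem_unitaryGroup_iff.1 hU, Matrix.mul_one]
  exact ⟨U, hU, α, β, conj_diagonal_of_eigen fun j => (hb j).1,
    conj_diagonal_of_eigen fun j => (hb j).2⟩

theorem commute_map_re_map_im_of_isSymm_of_mem_unitaryGroup {S : Matrix n n ℂ}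
    (hS : S ∈ unitaryGroup n ℂ) (hSymm : S.IsSymm) :
    Commute (S.map Complex.re) (S.map Complex.im) := by
  set X := S.map Complex.re
  set Y := S.map Complex.im
  have hstar : star S = X.map (↑) - Complex.I • Y.map (↑) := by
    ext i j
    rw [star_apply, hSymm.apply]
    apply Complex.ext <;> simp [X, Y]
  have hnormal : S * star S = star S * S := by
    rw [mem_unitaryGroup_iff.1 hS, mem_unitaryGroup_iff'.1 hS]
  rw [hstar, ← map_re_add_I_smul_map_im S] at hnormal
  simp only [add_mul, mul_add, sub_mul, mul_sub, smul_mul_assoc, mul_smul_comm] at hnormal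
  have hcomm : (2 * Complex.I) • ((X * Y).map (↑) - (Y * X).map ((↑) : ℝ → ℂ)) = 0 := by
    rw [map_ofReal_mul, map_ofReal_mul]
    linear_combination (norm := module) -hnormal
  rw [smul_eq_zero, sub_eq_zero] at hcomm
  exact map_injective Complex.ofReal_injective (hcomm.resolve_left (by simp))

theorem exists_orthogonal_diagonalize_of_isSymm_of_mem_unitaryGroup {S : Matrix n n ℂ}
    (hS : S ∈ unitaryGroup n ℂ) (hSymm : S.IsSymm) :
    ∃ k ∈ orthogonalGroup n ℝ, ∃ d : n → ℂ, S = k.map (↑) * diagonal d * (k.map (↑))ᵀ := by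
  obtain ⟨k, hk, α, β, hre, him⟩ :=
    (isHermitian_iff_isSymm.2 (hSymm.map _)).exists_unitary_diagonalize_of_commute
      (isHermitian_iff_isSymm.2 (hSymm.map _))
      (commute_map_re_map_im_of_isSymm_of_mem_unitaryGroup hS hSymm)
  refine ⟨k, hk, fun i => α i + Complex.I * β i, ?_⟩
  have hdiag : diagonal (fun i => (α i : ℂ) + Complex.I * β i)
      = diagonal (fun i => (α i : ℂ)) + Complex.I • diagonal (fun i => (β i : ℂ)) := by
    rw [← diagonal_smul, diagonal_add]
    rfl
  rw [← map_re_add_I_smul_map_im S, hre, him, star_eq_conjTranspose,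
    conjTranspose_eq_transpose_of_trivial]
  simp only [map_ofReal_mul, transpose_map, diagonal_map Complex.ofReal_zero, hdiag,
    Matrix.mul_add, Matrix.add_mul, Matrix.mul_smul, Matrix.smul_mul]

theorem exists_orthogonal_conj_of_charpoly_eq {S₁ S₂ : Matrix n n ℂ}
    (hS₁ : S₁ ∈ unitaryGroup n ℂ) (hS₁s : S₁.IsSymm) (hS₂ : S₂ ∈ unitaryGroup n ℂ)
    (hS₂s : S₂.IsSymm) (h : S₁.charpoly = S₂.charpoly) :
    ∃ k ∈ orthogonalGroup n ℝ, k.map (↑) * S₁ * (k.map (↑))ᵀ = S₂ := by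
  obtain ⟨k₁, hk₁, d₁, rfl⟩ := exists_orthogonal_diagonalize_of_isSymm_of_mem_unitaryGroup hS₁ hS₁s
  obtain ⟨k₂, hk₂, d₂, rfl⟩ := exists_orthogonal_diagonalize_of_isSymm_of_mem_unitaryGroup hS₂ hS₂s
  rw [charpoly_mul_mul_of_mul_eq_one (transpose_map_ofReal_mul_self hk₁),
    charpoly_mul_mul_of_mul_eq_one (transpose_map_ofReal_mul_self hk₂)] at h
  obtain ⟨σ, rfl⟩ := exists_perm_of_charpoly_diagonal_eq h
  refine ⟨k₂ * σ.permMatrix ℝ * k₁ᵀ, mul_mem (mul_mem hk₂ (permMatrix_mem_orthogonalGroup σ))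
    (transpose_mem_unitaryGroup_iff.2 hk₁), ?_⟩
  have hσ : (σ.permMatrix ℝ).map ((↑) : ℝ → ℂ) = σ.permMatrix ℂ :=
    PEquiv.map_toMatrix Complex.ofRealHom _
  rw [← permMatrix_mul_diagonal_mul_transpose]
  simp only [map_ofReal_mul, transpose_map, transpose_mul, transpose_transpose, hσ,
    Matrix.mul_assoc, transpose_map_ofReal_mul_cancel_left hk₁]

theorem exists_orthogonal_mul_eq_of_transpose_mul_self_eq {u w : Matrix n n ℂ}
    (hu : u ∈ unitaryGroup n ℂ) (hw : w ∈ unitaryGroup n ℂ) (h : wᵀ * w = uᵀ * u) :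
    ∃ k ∈ orthogonalGroup n ℝ, w = k.map (↑) * u := by
  have hA : (w * star u)ᵀ * (w * star u) = 1 := calc
    _ = (star u)ᵀ * (wᵀ * w) * star u := by simp only [transpose_mul, Matrix.mul_assoc]
    _ = (u * star u)ᵀ * (u * star u) := by rw [h, transpose_mul]; simp only [Matrix.mul_assoc]
    _ = 1 := by rw [mem_unitaryGroup_iff.1 hu, transpose_one, Matrix.one_mul]
  obtain ⟨k, hk, hkA⟩ :=
    exists_map_ofReal_eq_of_transpose_mul_self_eq_one (mul_mem hw (Unitary.star_mem hu)) hA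
  refine ⟨k, hk, ?_⟩
  rw [hkA, Matrix.mul_assoc, mem_unitaryGroup_iff'.1 hu, Matrix.mul_one]

end Matrix

open Matrix in
/-- For unitary `u, v`, the matrices `uᵀu` and `vᵀv` are conjugate in `U(n)`
iff `v = k₁ u k₂⁻¹` for some real orthogonal `k₁, k₂`. -/
theorem stmt_11 (n : ℕ) (u v : Matrix (Fin n) (Fin n) ℂ)
    (hu : u ∈ Matrix.unitaryGroup (Fin n) ℂ) (hv : v ∈ Matrix.unitaryGroup (Fin n) ℂ) :
    (∃ φ ∈ Matrix.unitaryGroup (Fin n) ℂ, φ * (uᵀ * u) * φ⁻¹ = vᵀ * v) ↔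
    ∃ k₁ k₂ : Matrix (Fin n) (Fin n) ℝ,
      k₁ ∈ Matrix.orthogonalGroup (Fin n) ℝ ∧ k₂ ∈ Matrix.orthogonalGroup (Fin n) ℝ ∧
      v = (k₁.map (fun x : ℝ => (x : ℂ))) * u * (k₂.map (fun x : ℝ => (x : ℂ)))⁻¹ := by
  constructor
  · rintro ⟨φ, hφ, hconj⟩
    rw [inv_eq_left_inv (mem_unitaryGroup_iff'.1 hφ)] at hconj
    have hchar : (uᵀ * u).charpoly = (vᵀ * v).charpoly := by
      rw [← hconj, charpoly_mul_mul_of_mul_eq_one (mem_unitaryGroup_iff'.1 hφ)]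
    obtain ⟨k, hk, hkuk⟩ := exists_orthogonal_conj_of_charpoly_eq
      (transpose_mul_self_mem_unitaryGroup hu) (isSymm_transpose_mul_self u)
      (transpose_mul_self_mem_unitaryGroup hv) (isSymm_transpose_mul_self v) hchar
    have hvk_sq : (v * k.map (↑))ᵀ * (v * k.map (↑)) = uᵀ * u := by
      rw [transpose_mul, Matrix.mul_assoc, ← Matrix.mul_assoc vᵀ, ← hkuk]
      simp only [Matrix.mul_assoc, transpose_map_ofReal_mul_cancel_left hk,
        transpose_map_ofReal_mul_self hk, Matrix.mul_one]
    obtain ⟨k₁, hk₁, hvk⟩ := exists_orthogonal_mul_eq_of_transpose_mul_self_eq hu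
      (mul_mem hv (map_ofReal_mem_unitaryGroup hk)) hvk_sq
    refine ⟨k₁, k, hk₁, hk, ?_⟩
    rw [inv_eq_left_inv (transpose_map_ofReal_mul_self hk), ← hvk, Matrix.mul_assoc,
      mul_eq_one_comm.1 (transpose_map_ofReal_mul_self hk), Matrix.mul_one]
  · rintro ⟨k₁, k₂, hk₁, hk₂, rfl⟩
    refine ⟨k₂.map (↑), map_ofReal_mem_unitaryGroup hk₂, ?_⟩
    rw [inv_eq_left_inv (transpose_map_ofReal_mul_self hk₂)]
    simp only [transpose_mul, transpose_transpose, Matrix.mul_assoc,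
      transpose_map_ofReal_mul_cancel_left hk₁]
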